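/- arXiv:2105.01086 — 4 statements merged into one kernel-verified Lean document; each statement's English description precedes it below -/
import Mathlib

section
/- In the Racah algebra R(n), the element Q_n = Σ_{1 ≤ i < j ≤ n} P_{ij} is central, i.e., Q_n commutes with every element of R(n). -/
/-- Generators of the Racah algebra `R(n)`. -/
inductive RacahGen (n : ℕ) : Type
  | P : Fin n → Fin n → RacahGen n
  | F : Fin n → Fin n → Fin n → RacahGen n

namespace Racah

variable (n : ℕ)

/-- The free `ℂ`-algebra on the generators. -/
abbrev FA (n : ℕ) := FreeAlgebra ℂ (RacahGen n)

noncomputable def p (i j : Fin n) : FA n := FreeAlgebra.ι ℂ (RacahGen.P i j)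
noncomputable def f (i j k : Fin n) : FA n := FreeAlgebra.ι ℂ (RacahGen.F i j k)

/-- Defining relations of the Racah algebra `R(n)`, including the index
symmetry conventions `P_{ij} = P_{ji}` and `F_{ijk} = −F_{jik} = F_{jki}`. -/
inductive Rel : FA n → FA n → Prop
  | Psymm (i j : Fin n) : Rel (p n i j) (p n j i)
  | Fswap (i j k : Fin n) : Rel (f n i j k) (-f n j i k)
  | Fcycle (i j k : Fin n) : Rel (f n i j k) (f n j k i)
  | PiiCentral (i : Fin n) (g : RacahGen n) :
      Rel (p n i i * FreeAlgebra.ι ℂ g) (FreeAlgebra.ι ℂ g * p n i i)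
  | PPcomm (i j k l : Fin n) (hij : i ≠ j) (hik : i ≠ k) (hil : i ≠ l)
      (hjk : j ≠ k) (hjl : j ≠ l) (hkl : k ≠ l) :
      Rel (p n i j * p n k l) (p n k l * p n i j)
  | PP (i j k : Fin n) (hij : i ≠ j) (hik : i ≠ k) (hjk : j ≠ k) :
      Rel (p n i j * p n j k - p n j k * p n i j) (2 * f n i j k)
  | PF (i j k : Fin n) (hij : i ≠ j) (hik : i ≠ k) (hjk : j ≠ k) :
      Rel (p n j k * f n i j k - f n i j k * p n j k)
          (p n i k * (p n j k + p n j j) - (p n j k + p n k k) * p n i j)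
  | PF2 (i j k l : Fin n) (hij : i ≠ j) (hik : i ≠ k) (hil : i ≠ l)
      (hjk : j ≠ k) (hjl : j ≠ l) (hkl : k ≠ l) :
      Rel (p n k l * f n i j k - f n i j k * p n k l)
          (p n i k * p n j l - p n i l * p n j k)
  | FF (i j k l : Fin n) (hij : i ≠ j) (hik : i ≠ k) (hil : i ≠ l)
      (hjk : j ≠ k) (hjl : j ≠ l) (hkl : k ≠ l) :
      Rel (f n i j k * f n j k l - f n j k l * f n i j k)
          (-(f n i j l + f n i k l) * p n j k)
  | FF2 (i j k l m : Fin n) (hij : i ≠ j) (hik : i ≠ k) (hil : i ≠ l) (him : i ≠ m)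
      (hjk : j ≠ k) (hjl : j ≠ l) (hjm : j ≠ m) (hkl : k ≠ l) (hkm : k ≠ m)
      (hlm : l ≠ m) :
      Rel (f n i j k * f n k l m - f n k l m * f n i j k)
          (f n i l m * p n j k - f n j l m * p n i k)

/-- The Racah algebra `R(n)`: the quotient of the free algebra by the two-sided
ideal generated by the defining relations. -/
abbrev R (n : ℕ) := RingQuot (Rel n)

/-- The generator `P_{ij}` of `R(n)`. -/
noncomputable def P (i j : Fin n) : R n := RingQuot.mkAlgHom ℂ (Rel n) (p n i j)

/-- The generator `F_{ijk}` of `R(n)`. -/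
noncomputable def F (i j k : Fin n) : R n := RingQuot.mkAlgHom ℂ (Rel n) (f n i j k)

end Racah

/-!
`P_{ii}` is central and `2 F_{ijk} = [P_{ij}, P_{jk}]`, so it suffices that `Q_n` commute with
each `P_{kl}`, `k ≠ l`. As `2 Q_n = Σ_{i,j} P_{ij} - Σ_i P_{ii}`, this reduces to the full sum
`Σ_{i,j} P_{ij}`. Relabelling the indices by the transposition `(k l)` permutes the terms of
`Σ_{i,j} [P_{ij}, P_{kl}]` and negates each of them, so this sum equals its own negative.
-/

theorem RingQuot.commute_of_forall_commute_ι {S X : Type*} [CommSemiring S]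
    {s : FreeAlgebra S X → FreeAlgebra S X → Prop} {a : RingQuot s}
    (h : ∀ x, Commute a (RingQuot.mkAlgHom S s (FreeAlgebra.ι S x))) (b : RingQuot s) :
    Commute a b := by
  obtain ⟨b, rfl⟩ := RingQuot.mkAlgHom_surjective S s b
  induction b using FreeAlgebra.induction with
  | grade0 r => rw [AlgHom.commutes]; exact Algebra.commute_algebraMap_right r a
  | grade1 x => exact h x
  | mul b c hb hc => rw [map_mul]; exact hb.mul_right hc
  | add b c hb hc => rw [map_add]; exact hb.add_right hc

theorem Finset.sum_sum_eq_two_nsmul_sum_lt_add_sum_diag {ι M : Type*} [Fintype ι]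
    [LinearOrder ι] [AddCommMonoid M] (g : ι → ι → M) (hg : ∀ i j, g i j = g j i) :
    ∑ i, ∑ j, g i j
      = 2 • ∑ q ∈ Finset.univ.filter (fun q : ι × ι => q.1 < q.2), g q.1 q.2
        + ∑ i, g i i := by
  have h_gt : ∑ q ∈ Finset.univ.filter (fun q : ι × ι => q.1 < q.2), g q.1 q.2
      = ∑ q ∈ Finset.univ.filter (fun q : ι × ι => q.2 < q.1), g q.1 q.2 :=
    Finset.sum_equiv (Equiv.prodComm ι ι) (by simp) (fun q _ => hg q.1 q.2)
  have h_diag :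
      ∑ i, g i i = ∑ q ∈ Finset.univ.filter (fun q : ι × ι => q.1 = q.2), g q.1 q.2 := by
    rw [Finset.sum_filter, Fintype.sum_prod_type]
    simp
  rw [two_nsmul, h_diag]
  nth_rw 2 [h_gt]
  simp only [Finset.sum_filter, ← Finset.sum_add_distrib, Fintype.sum_prod_type]
  refine Finset.sum_congr rfl fun i _ => Finset.sum_congr rfl fun j _ => ?_
  rcases lt_trichotomy i j with h | rfl | h
  · simp [h, h.not_gt, h.ne]
  · simp
  · simp [h, h.not_gt, h.ne']

namespace Racah

variable {n : ℕ}

instance : IsAddTorsionFree (R n) := .of_module_rat _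

lemma P_comm (i j : Fin n) : P n i j = P n j i :=
  RingQuot.mkAlgHom_rel ℂ (Rel.Psymm i j)

lemma F_swap_left (i j k : Fin n) : F n i j k = -F n j i k := by
  simpa [F] using RingQuot.mkAlgHom_rel ℂ (Rel.Fswap i j k)

lemma F_rotate (i j k : Fin n) : F n i j k = F n j k i :=
  RingQuot.mkAlgHom_rel ℂ (Rel.Fcycle i j k)

lemma F_swap_right (i j k : Fin n) : F n i j k = -F n i k j := by
  rw [F_rotate i j k, F_rotate i k j, F_swap_left k j i, neg_neg]

lemma F_self_left (i k : Fin n) : F n i i k = 0 :=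
  self_eq_neg.mp (F_swap_left i i k)

lemma F_self_right (i j : Fin n) : F n i j j = 0 :=
  self_eq_neg.mp (F_swap_right i j j)

lemma F_self_outer (i j : Fin n) : F n i j i = 0 := by
  rw [F_rotate, F_self_right]

lemma commute_P_self (i : Fin n) (x : R n) : Commute (P n i i) x :=
  RingQuot.commute_of_forall_commute_ι
    (fun g => by
      simpa [P, p, commute_iff_eq] using RingQuot.mkAlgHom_rel ℂ (Rel.PiiCentral i g)) x

lemma commute_P_P_of_disjoint {i j k l : Fin n} (hij : i ≠ j) (hik : i ≠ k) (hil : i ≠ l)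
    (hjk : j ≠ k) (hjl : j ≠ l) (hkl : k ≠ l) : Commute (P n i j) (P n k l) := by
  simpa [P, commute_iff_eq] using
    RingQuot.mkAlgHom_rel ℂ (Rel.PPcomm i j k l hij hik hil hjk hjl hkl)

lemma lie_P_P {i j k : Fin n} (hij : i ≠ j) (hik : i ≠ k) (hjk : j ≠ k) :
    ⁅P n i j, P n j k⁆ = 2 • F n i j k := by
  simpa [P, F, Ring.lie_def, two_nsmul, ← two_mul, map_ofNat] using
    RingQuot.mkAlgHom_rel ℂ (Rel.PP i j k hij hik hjk)

lemma lie_P_P_common_right {i j k : Fin n} (hij : i ≠ j) (hik : i ≠ k) (hjk : j ≠ k) :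
    ⁅P n i k, P n j k⁆ = -(2 • F n i j k) := by
  rw [P_comm j k, lie_P_P hik hij hjk.symm, F_swap_right, smul_neg]

lemma lie_P_swap_apply {k l : Fin n} (hkl : k ≠ l) (i j : Fin n) :
    ⁅P n (Equiv.swap k l i) (Equiv.swap k l j), P n k l⁆ = -⁅P n i j, P n k l⁆ := by
  rcases eq_or_ne i j with rfl | hij
  · simp only [(commute_P_self _ _).lie_eq, neg_zero]
  have h_fix {a : Fin n} (hak : a ≠ k) (hal : a ≠ l) : Equiv.swap k l a = a :=
    Equiv.swap_apply_of_ne_of_ne hak hal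
  rcases eq_or_ne i k with rfl | hik
  · rcases eq_or_ne j l with rfl | hjl
    · rw [Equiv.swap_apply_left, Equiv.swap_apply_right, P_comm j i, Ring.lie_def, sub_self,
        neg_zero]
    rw [Equiv.swap_apply_left, h_fix hij.symm hjl, P_comm l j, P_comm i j,
      lie_P_P_common_right hij.symm hjl hkl, lie_P_P hij.symm hjl hkl]
  rcases eq_or_ne i l with rfl | hil
  · rcases eq_or_ne j k with rfl | hjk
    · rw [Equiv.swap_apply_left, Equiv.swap_apply_right, P_comm i j, Ring.lie_def, sub_self,
        neg_zero]
    rw [Equiv.swap_apply_right, h_fix hjk hij.symm, P_comm k j, P_comm i j,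
      lie_P_P hjk hij.symm hkl, lie_P_P_common_right hjk hij.symm hkl, neg_neg]
  rw [h_fix hik hil]
  rcases eq_or_ne j k with rfl | hjk
  · rw [Equiv.swap_apply_left, lie_P_P_common_right hij hil hkl, lie_P_P hij hil hkl]
  rcases eq_or_ne j l with rfl | hjl
  · rw [Equiv.swap_apply_right, lie_P_P hik hij hkl, lie_P_P_common_right hik hij hkl, neg_neg]
  rw [h_fix hjk hjl, (commute_P_P_of_disjoint hij hik hil hjk hjl hkl).lie_eq, neg_zero]

lemma commute_sum_sum_P {k l : Fin n} (hkl : k ≠ l) :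
    Commute (∑ i, ∑ j, P n i j) (P n k l) := by
  rw [commute_iff_lie_eq, Ring.lie_def]
  simp only [Finset.sum_mul, Finset.mul_sum, ← Finset.sum_sub_distrib, ← Ring.lie_def]
  refine self_eq_neg.mp ?_
  calc ∑ i, ∑ j, ⁅P n i j, P n k l⁆
      = ∑ i, ∑ j, ⁅P n (Equiv.swap k l i) (Equiv.swap k l j), P n k l⁆ := by
        rw [← Equiv.sum_comp (Equiv.swap k l)]
        simp only [← Equiv.sum_comp (Equiv.swap k l) (fun j => ⁅P n _ j, P n k l⁆)]
    _ = -∑ i, ∑ j, ⁅P n i j, P n k l⁆ := by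
        simp only [lie_P_swap_apply hkl, Finset.sum_neg_distrib]

lemma commute_F_of_forall_commute_P {x : R n} (h : ∀ i j, Commute x (P n i j))
    (i j k : Fin n) : Commute x (F n i j k) := by
  rcases eq_or_ne i j with rfl | hij
  · simp [F_self_left]
  rcases eq_or_ne i k with rfl | hik
  · simp [F_self_outer]
  rcases eq_or_ne j k with rfl | hjk
  · simp [F_self_right]
  have h_lie : Commute x ⁅P n i j, P n j k⁆ := by
    rw [Ring.lie_def]
    exact ((h i j).mul_right (h j k)).sub_right ((h j k).mul_right (h i j))
  rwa [lie_P_P hij hik hjk, two_nsmul, ← two_smul ℂ, Commute.smul_right_iff₀ two_ne_zero]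
    at h_lie

lemma commute_of_forall_commute_P {x : R n} (h : ∀ i j, Commute x (P n i j)) (y : R n) :
    Commute x y := by
  refine RingQuot.commute_of_forall_commute_ι (fun g => ?_) y
  cases g with
  | P i j => exact h i j
  | F i j k => exact commute_F_of_forall_commute_P h i j k

noncomputable def Q (n : ℕ) : R n :=
  ∑ q ∈ Finset.univ.filter (fun q : Fin n × Fin n => q.1 < q.2), P n q.1 q.2

lemma commute_Q_P (k l : Fin n) : Commute (Q n) (P n k l) := by
  rcases eq_or_ne k l with rfl | hkl
  · exact (commute_P_self k _).symm
  have h_sum := Finset.sum_sum_eq_two_nsmul_sum_lt_add_sum_diag (P n) P_comm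
  have h_diag : Commute (∑ i, P n i i) (P n k l) :=
    Commute.sum_left _ _ _ fun i _ => commute_P_self i _
  have h_two : Commute ((2 : ℂ) • Q n) (P n k l) := by
    rw [two_smul, ← two_nsmul, ← add_sub_cancel_right (2 • Q n) (∑ i, P n i i), Q,
      ← h_sum]
    exact (commute_sum_sum_P hkl).sub_left h_diag
  exact (Commute.smul_left_iff₀ two_ne_zero).mp h_two

end Racah

open Racah in
theorem Qn_central_general (n : ℕ) :
    ∀ x : Racah.R n,
      (∑ q ∈ Finset.univ.filter (fun q : Fin n × Fin n => q.1 < q.2), P n q.1 q.2) * x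
        = x * ∑ q ∈ Finset.univ.filter (fun q : Fin n × Fin n => q.1 < q.2), P n q.1 q.2 :=
  commute_of_forall_commute_P (x := Q n) commute_Q_P

open Racah in
/-- In `R(n)`, the element `Q_n = Σ_{1 ≤ i < j ≤ n} P_{ij}` is
central. -/
theorem Qn_central (n : ℕ) (hn : 3 ≤ n) :
    ∀ x : Racah.R n,
      (∑ q ∈ Finset.univ.filter (fun q : Fin n × Fin n => q.1 < q.2), P n q.1 q.2) * x
        = x * ∑ q ∈ Finset.univ.filter (fun q : Fin n × Fin n => q.1 < q.2), P n q.1 q.2 :=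
  Qn_central_general n
end

section
/- For every integer r ≥ 0, the following identity of formal power series over ℤ holds: (1 − t²)^{2(r+1)} · Σ_{k ≥ 0} (−1)^k ã'_k t^k = Σ_{k=0}^{2r+1} (−1)^k a'_k t^k, where ã'_{2k} = C(r+k+1, k)·C(r+k, k), ã'_{2k+1} = C(r+k+1, k)·C(r+k+1, k+1), a'_{2k} = C(r, k)·C(r+1, k), and a'_{2k+1} = C(r, k)·C(r+1, k+1). -/
/-!
Substituting `t ↦ -t` removes the signs, and splitting both sides into their even and odd parts
in `t` reduces the identity to the cases `c = 0` and `c = 1` (with `m = r + 1`, `n = r`) of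
`(1 - x)^(m+n+1) · ∑ₛ C(m+s, s+c) C(n+c+s, s) xˢ = ∑ₖ C(m, k+c) C(n, k) xᵏ`.
Comparing coefficients against `(1 - x)^-(m+n+1) = ∑ᵢ C(m+n+i, m+n) xⁱ`, this becomes a
binomial sum, which after the reflection `k ↦ n - k` is evaluated by Vandermonde's identity,
trinomial revision, and Vandermonde again.
-/

open Finset PowerSeries

theorem Finset.sum_range_eq_sum_range_of_eq_zero {M : Type*} [AddCommMonoid M] {f : ℕ → M}
    {a b : ℕ} (h : ∀ k, min a b ≤ k → f k = 0) :
    ∑ k ∈ range a, f k = ∑ k ∈ range b, f k := by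
  have key : ∀ a b, a ≤ b → (∀ k, a ≤ k → f k = 0) →
      ∑ k ∈ range a, f k = ∑ k ∈ range b, f k := fun a b hab h =>
    sum_subset (range_subset_range.2 hab) fun k _ hk => h k (by simpa using hk)
  rcases le_total a b with hab | hba
  · exact key a b hab fun k hk => h k (by omega)
  · exact (key b a hba fun k hk => h k (by omega)).symm

namespace Nat

theorem add_choose_eq_sum_range {a b d B : ℕ} (hd : a ≤ d) (hB : a < B) :
    (a + b).choose d = ∑ i ∈ range B, a.choose i * b.choose (d - i) := by
  rw [add_choose_eq, Finset.Nat.sum_antidiagonal_eq_sum_range_succ_mk]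
  exact sum_range_eq_sum_range_of_eq_zero fun i hi => by
    rw [choose_eq_zero_of_lt (by omega), zero_mul]

theorem sum_choose_mul_choose_mul_choose (m n c x : ℕ) :
    ∑ k ∈ range (n + 1), n.choose k * k.choose x * m.choose (n + c - k)
      = n.choose x * (m + n - x).choose (n + c - x) := by
  have hvanish : ∀ k < x, n.choose k * k.choose x * m.choose (n + c - k) = 0 := fun k hk => by
    rw [choose_eq_zero_of_lt hk, mul_zero, zero_mul]
  rcases lt_or_ge n x with hnx | hxn
  · rw [choose_eq_zero_of_lt hnx, zero_mul]
    exact sum_eq_zero fun k hk => hvanish k (by simp at hk; omega)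
  obtain ⟨q, rfl⟩ := Nat.exists_eq_add_of_le hxn
  rw [show x + q + 1 = x + (q + 1) by omega, sum_range_add,
    sum_eq_zero fun k hk => hvanish k (by simpa using hk), zero_add,
    show m + (x + q) - x = q + m by omega, show x + q + c - x = q + c by omega,
    add_choose_eq_sum_range (a := q) (b := m) (B := q + 1) (by omega) (by omega), mul_sum]
  refine sum_congr rfl fun j _ => ?_
  rw [choose_mul (le_add_right x j), show x + q - x = q by omega,
    show x + j - x = j by omega, show x + q + c - (x + j) = q + c - j by omega, mul_assoc]

theorem choose_mul_choose_swap (m q c s : ℕ) :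
    (m + s).choose (m + q) * (m + q).choose (q + c)
      = (m + s).choose (s + c) * (s + c).choose (q + c) := by
  rcases lt_or_ge m c with hmc | hcm
  · rw [choose_eq_zero_of_lt (n := m + q) (k := q + c) (by omega),
      choose_eq_zero_of_lt (n := m + s) (k := s + c) (by omega),
      mul_zero, zero_mul]
  obtain ⟨p, rfl⟩ := Nat.exists_eq_add_of_le hcm
  have h := choose_mul (n := c + p + s) (k := c + p + q) (s := p) (by omega)
  rwa [choose_symm_of_eq_add (show c + p + q = p + (q + c) by omega),
    choose_symm_of_eq_add (show c + p + s = p + (s + c) by omega),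
    show c + p + s - p = s + c by omega, show c + p + q - p = q + c by omega] at h

theorem sum_choose_mul_choose_mul_add_choose (m n c s : ℕ) :
    ∑ k ∈ range (n + 1), m.choose (k + c) * n.choose k * (m + n + s - k).choose (m + n)
      = (m + s).choose (s + c) * (n + c + s).choose s := by
  calc _ = ∑ k ∈ range (n + 1),
          n.choose k * m.choose (n + c - k) * (k + (m + s)).choose (m + n) := by
        rw [← sum_range_reflect]
        refine sum_congr rfl fun k hk => ?_
        have hk : k ≤ n := by simpa [Nat.lt_succ_iff] using hk
        rw [choose_symm_of_eq_add (show n = (n + 1 - 1 - k) + k by omega),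
          show n + 1 - 1 - k + c = n + c - k by omega,
          show m + n + s - (n + 1 - 1 - k) = k + (m + s) by omega, mul_comm (m.choose _)]
    _ = ∑ k ∈ range (n + 1), ∑ x ∈ range (n + 1),
          n.choose k * m.choose (n + c - k) * (k.choose x * (m + s).choose (m + n - x)) := by
        refine sum_congr rfl fun k hk => ?_
        have hk : k < n + 1 := mem_range.1 hk
        rw [add_choose_eq_sum_range (b := m + s) (d := m + n) (by omega) hk, mul_sum]
    _ = ∑ x ∈ range (n + 1), (m + s).choose (m + n - x) *
          ∑ k ∈ range (n + 1), n.choose k * k.choose x * m.choose (n + c - k) := by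
        rw [sum_comm]
        refine sum_congr rfl fun x _ => ?_
        rw [mul_sum]
        exact sum_congr rfl fun k _ => by ring
    _ = ∑ x ∈ range (n + 1),
          (m + s).choose (s + c) * (n.choose x * (s + c).choose (n + c - x)) := by
        refine sum_congr rfl fun x hx => ?_
        have hx : x ≤ n := by simpa [Nat.lt_succ_iff] using hx
        have hswap := choose_mul_choose_swap m (n - x) c s
        rw [show m + (n - x) = m + n - x by omega, show n - x + c = n + c - x by omega] at hswap
        rw [sum_choose_mul_choose_mul_choose, mul_left_comm, hswap, mul_left_comm]
    _ = (m + s).choose (s + c) * (n + c + s).choose s := by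
        rw [← mul_sum, ← add_choose_eq_sum_range (by omega) (by omega),
          choose_symm_of_eq_add (show n + (s + c) = n + c + s by omega), ← add_assoc,
          add_right_comm]

theorem sum_antidiagonal_add_choose_mul_choose_mul_choose (m n c s : ℕ) :
    ∑ ij ∈ antidiagonal s, (m + n + ij.1).choose (m + n) * (m.choose (ij.2 + c) * n.choose ij.2)
      = (m + s).choose (s + c) * (n + c + s).choose s := by
  rw [← sum_choose_mul_choose_mul_add_choose, ← Finset.Nat.sum_antidiagonal_swap]
  simp only [Prod.fst_swap, Prod.snd_swap]
  rw [Finset.Nat.sum_antidiagonal_eq_sum_range_succ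
    (fun k i => (m + n + i).choose (m + n) * (m.choose (k + c) * n.choose k))]
  calc _ = ∑ k ∈ range (s + 1),
          m.choose (k + c) * n.choose k * (m + n + s - k).choose (m + n) :=
        sum_congr rfl fun k hk => by
          rw [show m + n + (s - k) = m + n + s - k by simp at hk; omega]
          ring
    _ = _ := sum_range_eq_sum_range_of_eq_zero fun k hk => by
        rcases lt_or_ge n k with hnk | hkn
        · rw [choose_eq_zero_of_lt hnk, mul_zero, zero_mul]
        · rw [choose_eq_zero_of_lt (by omega : m + n + s - k < m + n), mul_zero]

end Nat

namespace PowerSeries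

variable {R : Type*} [CommRing R]

theorem mk_eq_expand_add_X_mul_expand (f : ℕ → R) :
    mk f = expand 2 two_ne_zero (mk fun k => f (2 * k))
      + X * expand 2 two_ne_zero (mk fun k => f (2 * k + 1)) := by
  ext n
  obtain ⟨k, rfl | rfl⟩ := Nat.even_or_odd' n
  · rcases k with _ | k
    · simp
    · rw [show 2 * (k + 1) = 2 * k + 1 + 1 by ring]
      simp [coeff_expand, show (2 * k + 1 + 1) / 2 = k + 1 by omega, mul_add]
  · simp [coeff_expand]

theorem one_sub_X_sq_pow_mul_mk_eq_mk {f g : ℕ → R} {N : ℕ}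
    (heven : (1 - X) ^ N * mk (fun k => f (2 * k)) = mk fun k => g (2 * k))
    (hodd : (1 - X) ^ N * mk (fun k => f (2 * k + 1)) = mk fun k => g (2 * k + 1)) :
    (1 - X ^ 2) ^ N * mk f = mk g := by
  have hsq : (1 - X ^ 2 : R⟦X⟧) ^ N = expand 2 two_ne_zero ((1 - X) ^ N) := by simp
  rw [mk_eq_expand_add_X_mul_expand f, mk_eq_expand_add_X_mul_expand g, ← heven, ← hodd,
    map_mul, map_mul, hsq]
  ring

theorem one_sub_X_sq_pow_mul_mk_neg_one_pow {f g : ℕ → R} {N : ℕ}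
    (h : (1 - X ^ 2) ^ N * mk f = mk g) :
    (1 - X ^ 2) ^ N * mk (fun k => (-1) ^ k * f k) = mk fun k => (-1) ^ k * g k := by
  simpa [rescale_mk] using congrArg (rescale (-1 : R)) h

theorem sum_range_C_mul_X_pow_eq_mk {f : ℕ → R} {N : ℕ} (hf : ∀ k, N ≤ k → f k = 0) :
    ∑ k ∈ range N, C (f k) * X ^ k = mk f := by
  ext n
  simp only [map_sum, coeff_C_mul_X_pow, sum_ite_eq, mem_range, coeff_mk]
  split_ifs with hn
  · rfl
  · exact (hf n (not_lt.1 hn)).symm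

theorem one_sub_X_pow_mul_mk_choose_mul_choose (m n c : ℕ) :
    (1 - X : R⟦X⟧) ^ (m + n + 1)
        * mk (fun s => ((m + s).choose (s + c) * (n + c + s).choose s : R))
      = mk fun k => (m.choose (k + c) * n.choose k : R) := by
  have hconv : mk (fun s => ((m + s).choose (s + c) * (n + c + s).choose s : R))
      = (mk fun i => ((m + n + i).choose (m + n) : R))
        * mk fun k => (m.choose (k + c) * n.choose k : R) := by
    ext s
    have h := Nat.sum_antidiagonal_add_choose_mul_choose_mul_choose m n c s
    simpa [coeff_mul] using congrArg (Nat.cast : ℕ → R) h.symm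
  rw [hconv, ← mul_assoc, mul_comm ((1 - X) ^ _), mk_add_choose_mul_one_sub_pow_eq_one, one_mul]

end PowerSeries

/-- For every `r ≥ 0`, in `ℤ⟦t⟧`:
`(1 − t²)^{2(r+1)} · Σ_{k≥0} (−1)^k ã'_k t^k = Σ_{k=0}^{2r+1} (−1)^k a'_k t^k`,
where `ã'_{2k} = C(r+k+1,k)·C(r+k,k)`, `ã'_{2k+1} = C(r+k+1,k)·C(r+k+1,k+1)`,
`a'_{2k} = C(r,k)·C(r+1,k)`, `a'_{2k+1} = C(r,k)·C(r+1,k+1)`. -/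
theorem hilbert_series_identity_primed (r : ℕ)
    (aTil : ℕ → ℤ)
    (hae : ∀ k, aTil (2 * k) = ((r + k + 1).choose k : ℤ) * ((r + k).choose k : ℤ))
    (hao : ∀ k, aTil (2 * k + 1)
        = ((r + k + 1).choose k : ℤ) * ((r + k + 1).choose (k + 1) : ℤ))
    (a : ℕ → ℤ)
    (hbe : ∀ k, a (2 * k) = (r.choose k : ℤ) * ((r + 1).choose k : ℤ))
    (hbo : ∀ k, a (2 * k + 1) = (r.choose k : ℤ) * ((r + 1).choose (k + 1) : ℤ)) :
    (1 - PowerSeries.X ^ 2) ^ (2 * (r + 1)) *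
        PowerSeries.mk (fun k => (-1) ^ k * aTil k)
      = ∑ k ∈ Finset.range (2 * r + 2),
          PowerSeries.C ((-1) ^ k * a k) * PowerSeries.X ^ k := by
  have hexp : 2 * (r + 1) = r + 1 + r + 1 := by ring
  have hmain : (1 - X ^ 2) ^ (2 * (r + 1)) * PowerSeries.mk aTil = PowerSeries.mk a := by
    refine one_sub_X_sq_pow_mul_mk_eq_mk ?_ ?_ <;> rw [hexp]
    · convert one_sub_X_pow_mul_mk_choose_mul_choose (R := ℤ) (r + 1) r 0 using 4 with k
      · rw [hae, add_zero, add_zero, add_right_comm r 1 k]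
      · rw [hbe, add_zero, mul_comm]
    · convert one_sub_X_pow_mul_mk_choose_mul_choose (R := ℤ) (r + 1) r 1 using 4 with k
      · rw [hao, add_right_comm r 1 k, mul_comm]
      · rw [hbo, mul_comm]
  rw [one_sub_X_sq_pow_mul_mk_neg_one_pow hmain, sum_range_C_mul_X_pow_eq_mk]
  intro k hk
  obtain ⟨j, rfl | rfl⟩ := Nat.even_or_odd' k
  · simp [hbe, Nat.choose_eq_zero_of_lt (show r < j by omega)]
  · simp [hbo, Nat.choose_eq_zero_of_lt (show r < j by omega)]
end

section
/- For every integer r ≥ 0, the constant term (the coefficient of x⁰) of the Laurent polynomial (1 − x²)·(x + x⁻¹)^{2r} over ℤ equals the r-th Catalan number c_r. -/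
/-!
Expanding by the binomial theorem, `(x + x⁻¹)^(2r)` has coefficient `C(2r, k)` at `x^(2r - 2k)`.
Multiplying by `1 − x²` makes the constant term `C(2r, r) − C(2r, r + 1)`, the ballot-number
form of `c_r`.
-/

open LaurentPolynomial Finset

lemma LaurentPolynomial.coeff_T_mul {R : Type*} [Semiring R] (n m : ℤ) (f : R[T;T⁻¹]) :
    (T n * f).coeff m = f.coeff (m - n) := by
  rw [T, AddMonoidAlgebra.coeff_single_mul_apply, one_mul, neg_add_eq_sub]

-- No hypothesis `k ≤ n`: for `k > n` both sides vanish, and the case `r = 0` below needs that.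
lemma coeff_T_add_T_neg_pow {R : Type*} [CommSemiring R] (n k : ℕ) :
    ((T 1 + T (-1) : R[T;T⁻¹]) ^ n).coeff (n - 2 * k) = n.choose k := by
  have hterm (m : ℕ) (hm : m ∈ range (n + 1)) :
      (T (-1) ^ m * T 1 ^ (n - m) * (n.choose m : R[T;T⁻¹])).coeff (n - 2 * k) =
        if k = m then (n.choose m : R) else 0 := by
    rw [T_pow, T_pow, ← T_add, ← map_natCast (C : R →+* R[T;T⁻¹]), coeff_T_mul, C_apply]
    congr 1
    push_cast [Nat.cast_sub (mem_range_succ_iff.mp hm)]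
    exact propext (by omega)
  rw [add_comm, add_pow, AddMonoidAlgebra.coeff_sum, sum_apply', sum_congr rfl hterm, sum_ite_eq]
  split_ifs with hk
  · rfl
  · rw [Nat.choose_eq_zero_of_lt (by simpa using hk), Nat.cast_zero]

theorem catalan_eq_choose_sub_choose (r : ℕ) :
    (catalan r : ℤ) = (2 * r).choose r - (2 * r).choose (r + 1) := by
  have hcentral : ((r : ℤ) + 1) * catalan r = (2 * r).choose r := by
    exact_mod_cast succ_mul_catalan_eq_centralBinom r
  have hsucc : ((2 * r).choose (r + 1) : ℤ) * (r + 1) = (2 * r).choose r * r := by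
    have := Nat.choose_succ_right_eq (2 * r) r
    rw [show 2 * r - r = r by omega] at this
    exact_mod_cast this
  apply mul_left_cancel₀ (show ((r : ℤ) + 1) ≠ 0 by positivity)
  linear_combination hcentral + hsucc

open LaurentPolynomial in
/-- For every `r ≥ 0`, the constant term (coefficient of `x⁰`)
of the Laurent polynomial `(1 − x²)(x + x⁻¹)^{2r}` over `ℤ` is the `r`-th
Catalan number. -/
theorem constantTerm_eq_catalan (r : ℕ) :
    (((1 - T 2) * (T 1 + T (-1)) ^ (2 * r) : LaurentPolynomial ℤ)).coeff 0
      = (catalan r : ℤ) := by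
  have hcentral : ((T 1 + T (-1) : ℤ[T;T⁻¹]) ^ (2 * r)).coeff 0 = (2 * r).choose r := by
    simpa using coeff_T_add_T_neg_pow (R := ℤ) (2 * r) r
  have hshifted : ((T 1 + T (-1) : ℤ[T;T⁻¹]) ^ (2 * r)).coeff (-2) = (2 * r).choose (r + 1) := by
    convert coeff_T_add_T_neg_pow (R := ℤ) (2 * r) (r + 1) using 2
    push_cast
    ring
  rw [sub_mul, one_mul, AddMonoidAlgebra.coeff_sub, Finsupp.sub_apply, coeff_T_mul, zero_sub,
    hcentral, hshifted, catalan_eq_choose_sub_choose]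
end

section
/- For every integer n ≥ 0, the constant term (the coefficient of x⁰) of the Laurent polynomial (1 − x²)·(1 + x² + x⁻²)^n over ℤ equals the n-th Riordan number R_n = Σ_{i=0}^{n} (−1)^{n−i} C(n, i) c_i, where c_i is the i-th Catalan number. -/
/-!
Since `1 + x² + x⁻² = (x + x⁻¹)² − 1`, the binomial theorem writes the constant term as
`Σ (−1)^{n−i} C(n, i) · [x⁰] (1 − x²)(x + x⁻¹)^{2i}`. The coefficient of `x^{2k−m}` in
`(x + x⁻¹)^m` is `C(m, k)`, and `x + x⁻¹` is invariant under `x ↦ x⁻¹`, so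
`[x⁰] (1 − x²)(x + x⁻¹)^{2i} = C(2i, i) − C(2i, i + 1)`, which is the Catalan number `c_i`.
-/

open LaurentPolynomial Finset

theorem catalan_eq_choose_sub_choose_succ (n : ℕ) :
    (catalan n : ℤ) = (2 * n).choose n - (2 * n).choose (n + 1) := by
  have hcat : ((n + 1 : ℕ) : ℤ) * catalan n = (2 * n).choose n := by
    exact_mod_cast succ_mul_catalan_eq_centralBinom n
  have hsucc : ((2 * n).choose (n + 1) : ℤ) * (n + 1) = (2 * n).choose n * n := by
    have := Nat.choose_succ_right_eq (2 * n) n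
    rw [show 2 * n - n = n by omega] at this
    exact_mod_cast this
  refine mul_left_cancel₀ (show ((n + 1 : ℕ) : ℤ) ≠ 0 by positivity) ?_
  push_cast at hcat ⊢
  linear_combination hcat + hsucc

section
variable {R : Type*}

theorem coeff_T_one_add_T_neg_one_pow [CommSemiring R] (m k : ℕ) :
    ((T 1 + T (-1) : R[T;T⁻¹]) ^ m).coeff (2 * k - m) = m.choose k := by
  have hterm : ∀ j ∈ range (m + 1), (T 1 ^ j * T (-1) ^ (m - j) * (m.choose j : R[T;T⁻¹]))
      = .single (2 * j - m) (m.choose j : R) := by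
    intro j hj
    rw [T_pow, T_pow, ← T_add, single_eq_C_mul_T, ← map_natCast C, mul_comm]
    congr 2
    have : j ≤ m := Nat.lt_succ_iff.mp (mem_range.mp hj)
    push_cast [this]; ring
  rw [add_pow, sum_congr rfl hterm, AddMonoidAlgebra.coeff_sum, Finsupp.finsetSum_apply,
    sum_eq_single k]
  · rw [AddMonoidAlgebra.coeff_single, Finsupp.single_eq_same]
  · intro j _ hjk
    simp only [AddMonoidAlgebra.coeff_single, Finsupp.single_apply]
    rw [if_neg (by omega)]
  · intro hk
    simp [Nat.choose_eq_zero_of_lt (by simpa using hk : m < k)]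

theorem invert_T_one_add_T_neg_one [CommSemiring R] :
    invert (T 1 + T (-1) : R[T;T⁻¹]) = T 1 + T (-1) := by
  simp [add_comm]

theorem coeff_zero_one_sub_T_two_mul_T_one_add_T_neg_one_pow [CommRing R] (i : ℕ) :
    ((1 - T 2) * (T 1 + T (-1)) ^ (2 * i) : R[T;T⁻¹]).coeff 0
      = (2 * i).choose i - (2 * i).choose (i + 1) := by
  set f : R[T;T⁻¹] := (T 1 + T (-1)) ^ (2 * i)
  have hsymm : f.coeff (-2) = f.coeff 2 := by
    rw [← invert_apply, map_pow, invert_T_one_add_T_neg_one]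
  have h0 : f.coeff 0 = (2 * i).choose i := by
    simpa using coeff_T_one_add_T_neg_one_pow (R := R) (2 * i) i
  have h2 : f.coeff 2 = (2 * i).choose (i + 1) := by
    convert coeff_T_one_add_T_neg_one_pow (R := R) (2 * i) (i + 1) using 2
    push_cast; ring
  rw [sub_mul, one_mul, AddMonoidAlgebra.coeff_sub, Finsupp.sub_apply, T,
    AddMonoidAlgebra.coeff_single_mul_apply, one_mul]
  simp [hsymm, h0, h2]

theorem one_add_T_two_add_T_neg_two [CommRing R] :
    (1 + T 2 + T (-2) : R[T;T⁻¹]) = (T 1 + T (-1)) ^ 2 + C (-1) := by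
  rw [add_sq, T_pow, mul_assoc, ← T_add, T_pow, map_neg, map_one]
  norm_num
  ring

end

open LaurentPolynomial in
/-- For every `n ≥ 0`, the constant term of the Laurent
polynomial `(1 − x²)(1 + x² + x⁻²)^n` over `ℤ` equals the `n`-th Riordan number
`R_n = Σ_{i=0}^n (−1)^{n−i} C(n,i) c_i`. -/
theorem constantTerm_eq_riordan (n : ℕ) :
    (((1 - T 2) * (1 + T 2 + T (-2)) ^ n : LaurentPolynomial ℤ)).coeff 0
      = ∑ i ∈ Finset.range (n + 1), (-1) ^ (n - i) * (n.choose i : ℤ) * (catalan i : ℤ) := by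
  rw [one_add_T_two_add_T_neg_two, add_pow, mul_sum, AddMonoidAlgebra.coeff_sum,
    Finsupp.finsetSum_apply]
  refine sum_congr rfl fun i _ => ?_
  rw [← pow_mul, ← map_pow, ← map_natCast C, mul_assoc, ← map_mul, mul_comm _ (C _),
    mul_left_comm, ← smul_eq_C_mul, AddMonoidAlgebra.coeff_smul_apply,
    coeff_zero_one_sub_T_two_mul_T_one_add_T_neg_one_pow, catalan_eq_choose_sub_choose_succ, smul_eq_mul, mul_assoc]
end
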